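/- arXiv:1212.3421 — 7 statements merged into one kernel-verified Lean document; each statement's English description precedes it below -/
import Mathlib

section
/- Let p be a prime, 1 < k < p, and A ⊆ ℤ/pℤ with |A| = m. Then the number of k-element subsets σ of ℤ/pℤ whose elements sum to an element of A equals (m/p)·C(p,k) = (m/k)·C(p-1,k-1). -/
open Finset

/-
Translating a `k`-subset by `c` shifts its sum by `k • c`. When `k` is coprime to `|G|`, the map
`c ↦ k • c` is onto, so all fibres of the sum map on `k`-subsets of `G` have the same size, namely
`C(|G|, k) / |G|`; summing over the fibres above `A` gives the count `|A| · C(|G|, k) / |G|`.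
-/

variable {G : Type*} [AddCommGroup G] [Fintype G] [DecidableEq G]

theorem card_powersetCard_sum_eq_add_nsmul (k : ℕ) (s c : G) :
    #{σ ∈ (univ : Finset G).powersetCard k | ∑ x ∈ σ, x = s + k • c} =
      #{σ ∈ (univ : Finset G).powersetCard k | ∑ x ∈ σ, x = s} := by
  symm
  refine card_equiv (Equiv.addRight c).finsetCongr fun σ => ?_
  simp only [mem_filter, mem_powersetCard_univ, Equiv.finsetCongr_apply, card_map, sum_map,
    Equiv.coe_toEmbedding, Equiv.coe_addRight, sum_add_distrib, sum_const]
  constructor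
  · rintro ⟨rfl, hsum⟩
    exact ⟨rfl, by rw [hsum]⟩
  · rintro ⟨rfl, hsum⟩
    exact ⟨rfl, add_right_cancel hsum⟩

theorem card_powersetCard_sum_eq_of_coprime {k : ℕ} (hk : (Nat.card G).Coprime k) (s t : G) :
    #{σ ∈ (univ : Finset G).powersetCard k | ∑ x ∈ σ, x = t} =
      #{σ ∈ (univ : Finset G).powersetCard k | ∑ x ∈ σ, x = s} := by
  obtain ⟨c, hc : k • c = t - s⟩ := hk.nsmul_right_bijective.surjective (t - s)
  rw [← card_powersetCard_sum_eq_add_nsmul k s c, hc, add_sub_cancel]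

theorem card_mul_card_powersetCard_sum_mem_of_coprime {k : ℕ} (hk : (Nat.card G).Coprime k)
    (A : Finset G) :
    Fintype.card G * #{σ ∈ (univ : Finset G).powersetCard k | ∑ x ∈ σ, x ∈ A} =
      #A * (Fintype.card G).choose k := by
  set fibre : G → ℕ := fun s => #{σ ∈ (univ : Finset G).powersetCard k | ∑ x ∈ σ, x = s}
  have fibre_eq (s : G) : fibre s = fibre 0 := card_powersetCard_sum_eq_of_coprime hk 0 s
  have hA : #{σ ∈ (univ : Finset G).powersetCard k | ∑ x ∈ σ, x ∈ A} = #A * fibre 0 := by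
    rw [card_eq_sum_card_fiberwise (f := fun σ => ∑ x ∈ σ, x) (t := A)
      (s := {σ ∈ (univ : Finset G).powersetCard k | ∑ x ∈ σ, x ∈ A})
      fun σ hσ => (mem_filter.1 hσ).2]
    refine sum_const_nat fun s hs => ?_
    rw [filter_filter, ← fibre_eq s]
    exact congrArg card (filter_congr fun σ _ => ⟨And.right, fun h => ⟨h ▸ hs, h⟩⟩)
  have htotal : Fintype.card G * fibre 0 = (Fintype.card G).choose k := by
    rw [← card_univ, ← card_powersetCard, card_eq_sum_card_fiberwise (f := fun σ => ∑ x ∈ σ, x)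
      (t := univ) fun _ _ => mem_coe.2 (mem_univ _)]
    exact (sum_const_nat fun s _ => fibre_eq s).symm
  rw [hA, ← htotal]
  ring

/-- The number of `k`-element subsets of `ℤ/pℤ` whose elements sum to an element of `A`
equals `(m/p)·C(p,k) = (m/k)·C(p-1,k-1)` (stated multiplicatively to avoid division). -/
theorem sum_complex_top_face_count (p k m : ℕ) (hp : p.Prime) [NeZero p]
    (hk1 : 1 < k) (hkp : k < p) (A : Finset (ZMod p)) (hm : A.card = m) :
    p * (((Finset.univ : Finset (ZMod p)).powersetCard k).filter
        (fun σ => (∑ x ∈ σ, x) ∈ A)).card = m * Nat.choose p k ∧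
    k * (((Finset.univ : Finset (ZMod p)).powersetCard k).filter
        (fun σ => (∑ x ∈ σ, x) ∈ A)).card = m * Nat.choose (p - 1) (k - 1) := by
  have hcop : (Nat.card (ZMod p)).Coprime k := by
    rw [Nat.card_zmod]
    exact Nat.coprime_of_lt_prime (by omega) hkp hp
  have hcount := card_mul_card_powersetCard_sum_mem_of_coprime hcop A
  rw [ZMod.card, hm] at hcount
  refine ⟨hcount, Nat.eq_of_mul_eq_mul_left hp.pos ?_⟩
  obtain ⟨n, rfl⟩ : ∃ n, p = n + 1 := ⟨p - 1, by omega⟩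
  obtain ⟨j, rfl⟩ : ∃ j, k = j + 1 := ⟨k - 1, by omega⟩
  set N := #{σ ∈ (univ : Finset (ZMod (n + 1))).powersetCard (j + 1) | ∑ x ∈ σ, x ∈ A}
  simp only [Nat.add_sub_cancel]
  calc (n + 1) * ((j + 1) * N) = (j + 1) * ((n + 1) * N) := by ring
    _ = m * ((n + 1).choose (j + 1) * (j + 1)) := by rw [hcount]; ring
    _ = (n + 1) * (m * n.choose j) := by rw [← Nat.add_one_mul_choose_eq]; ring
end

section
/- Let p be prime and 1 ≤ k ≤ p-1. For each a ∈ ℤ/pℤ, the number of k-element subsets of ℤ/pℤ whose elements sum to a is exactly (1/p)·C(p,k); in particular this count is independent of a. -/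
open Finset

/-- For each `a ∈ ℤ/pℤ`, the number of `k`-element subsets of `ℤ/pℤ` summing to `a`
is exactly `(1/p)·C(p,k)`; in particular it is independent of `a`. -/
theorem count_subsets_with_given_sum (p k : ℕ) (hp : p.Prime) [NeZero p]
    (hk1 : 1 ≤ k) (hkp : k ≤ p - 1) (a : ZMod p) :
    p * (((Finset.univ : Finset (ZMod p)).powersetCard k).filter
        (fun σ => (∑ x ∈ σ, x) = a)).card = Nat.choose p k := by
  haveI := Fact.mk hp
  set f : ZMod p → ℕ := fun a => (((Finset.univ : Finset (ZMod p)).powersetCard k).filter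
        (fun σ => (∑ x ∈ σ, x) = a)).card with hf
  have hklt : k < p := lt_of_le_of_lt hkp (Nat.sub_lt hp.pos one_pos)
  have hk0 : (k : ZMod p) ≠ 0 := by
    rw [Ne, ZMod.natCast_eq_zero_iff]
    intro h
    exact absurd (Nat.le_of_dvd (lt_of_lt_of_le Nat.zero_lt_one hk1) h) (not_le.2 hklt)
  have key : ∀ (a : ZMod p) (t : ZMod p), f a = f (a + k * t) := by
    intro a t
    apply Finset.card_bij' (fun σ _ => σ.image (· + t)) (fun σ _ => σ.image (· + (-t)))
    · intro σ _
      rw [Finset.image_image]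
      simp
    · intro σ _
      rw [Finset.image_image]
      simp
    · intro σ hσ
      simp only [mem_filter, mem_powersetCard_univ] at hσ ⊢
      constructor
      · rw [Finset.card_image_of_injective _ (add_left_injective t)]; exact hσ.1
      · rw [Finset.sum_image (fun x _ y _ h => add_left_injective t h),
          Finset.sum_add_distrib, hσ.2, Finset.sum_const, hσ.1, nsmul_eq_mul]
    · intro σ hσ
      simp only [mem_filter, mem_powersetCard_univ] at hσ ⊢
      constructor
      · rw [Finset.card_image_of_injective _ (add_left_injective (-t))]; exact hσ.1
      · rw [Finset.sum_image (fun x _ y _ h => add_left_injective (-t) h),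
          Finset.sum_add_distrib, hσ.2, Finset.sum_const, hσ.1, nsmul_eq_mul]
        ring
  have hconst : ∀ a b : ZMod p, f a = f b := by
    intro a b
    have := key a ((b - a) * (k : ZMod p)⁻¹)
    rwa [← mul_assoc, mul_comm (k : ZMod p), mul_assoc, mul_inv_cancel₀ hk0, mul_one,
      add_sub_cancel] at this
  have htotal : ∑ b : ZMod p, f b = Nat.choose p k := by
    rw [hf]
    rw [← Finset.card_eq_sum_card_fiberwise (f := fun σ => ∑ x ∈ σ, x)
      (s := (Finset.univ : Finset (ZMod p)).powersetCard k) (t := Finset.univ)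
      (fun σ _ => Finset.mem_univ _)]
    rw [Finset.card_powersetCard, Finset.card_univ, ZMod.card]
  calc p * f a = ∑ _b : ZMod p, f a := by
        rw [Finset.sum_const, Finset.card_univ, ZMod.card, smul_eq_mul]
    _ = ∑ b : ZMod p, f b := Finset.sum_congr rfl (fun b _ => hconst a b)
    _ = Nat.choose p k := htotal
end

section
/- Let p be prime, k < p, G = (ℤ/pℤ)^k written multiplicatively with generators x_1,…,x_k, and let 0 ≤ b_1 < … < b_k ≤ p-1. In the group algebra 𝔽_p[G], the determinant of the k×k matrix N_β with entries N_β(i,j) = x_i^{-b_j} equals w_β · ∏_{1≤i<j≤k}(x_i - x_j), where w_β is a unit of 𝔽_p[G]. -/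
/-!
Over a UFD `R`, the alternant `det (X_a ^ c_b)` vanishes under `X_i ↦ X_j`, so it is divisible by
each of the pairwise non-associated primes `X_i - X_j`, hence by the Vandermonde product; call the
quotient `s`. Specializing `X_i ↦ T ^ i` and cancelling the common power of `T - 1` gives
`∏_{i<j} (c_j - c_i) = ∏_{i<j} (i - j) * s(1, …, 1)`, so `s(1, …, 1) ≠ 0` once the `c_j` are
distinct in `R`. Take `R = 𝔽_p` and `c_j = p - b_j`, and substitute the generators `x_i` of
`𝔽_p[G]`: as `(x_i - 1) ^ p = x_i ^ p - 1 = 0`, the element `s(x) - s(1, …, 1)` is nilpotent, so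
`w = s(x)` is a unit.
-/

open Finset

namespace Polynomial

variable {R : Type*} [CommRing R]

theorem exists_X_pow_sub_X_pow_eq (a b : ℕ) :
    ∃ q : R[X], X ^ a - X ^ b = (X - 1) * q ∧ q.eval 1 = a - b :=
  ⟨∑ m ∈ range a, X ^ m - ∑ m ∈ range b, X ^ m, by rw [mul_sub, mul_geom_sum, mul_geom_sum]; ring,
    by simp⟩

theorem exists_prod_prod_X_pow_sub_X_pow_eq {ι κ : Type*} (s : Finset ι) (t : ι → Finset κ)
    (a b : ι → κ → ℕ) :
    ∃ q : R[X], ∏ i ∈ s, ∏ j ∈ t i, (X ^ a i j - X ^ b i j) =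
      (X - 1) ^ (∑ i ∈ s, #(t i)) * q ∧ q.eval 1 = ∏ i ∈ s, ∏ j ∈ t i, ((a i j : R) - b i j) := by
  choose q hq hq1 using fun i j => exists_X_pow_sub_X_pow_eq (R := R) (a i j) (b i j)
  refine ⟨∏ i ∈ s, ∏ j ∈ t i, q i j, ?_, by simp [eval_prod, hq1]⟩
  simp only [hq, prod_mul_distrib, prod_const, prod_pow_eq_pow_sum]

end Polynomial

namespace MvPolynomial

variable {R S σ : Type*} [CommRing R] [CommRing S] [Algebra R S]

theorem aeval_sub_aeval_mem {I : Ideal S} {x y : σ → S} (h : ∀ m, x m - y m ∈ I)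
    (f : MvPolynomial σ R) : aeval x f - aeval y f ∈ I := by
  rw [← Ideal.Quotient.eq, ← Ideal.Quotient.mkₐ_eq_mk R, ← AlgHom.comp_apply, ← AlgHom.comp_apply]
  congr 1
  ext m
  simpa [Ideal.Quotient.eq] using h m

theorem isUnit_aeval_of_isNilpotent_sub {x y : σ → S} (h : ∀ m, IsNilpotent (x m - y m))
    {f : MvPolynomial σ R} (hf : IsUnit (aeval y f)) : IsUnit (aeval x f) := by
  have hspan : Ideal.span (Set.range fun m => x m - y m) ≤ nilradical S := by
    rw [Ideal.span_le]
    rintro _ ⟨m, rfl⟩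
    exact h m
  have hnil : IsNilpotent (aeval x f - aeval y f) :=
    hspan (aeval_sub_aeval_mem (fun m => Ideal.subset_span (Set.mem_range_self m)) f)
  simpa using hnil.isUnit_add_right_of_commute hf (Commute.all _ _)

theorem X_sub_X_dvd_of_aeval_update_eq_zero [DecidableEq σ] {i j : σ} {f : MvPolynomial σ R}
    (hf : aeval (Function.update (X (R := R)) i (X j)) f = 0) : X i - X j ∣ f := by
  rw [← Ideal.mem_span_singleton, ← sub_zero f, ← hf]
  nth_rw 1 [← aeval_X_left_apply f]
  refine aeval_sub_aeval_mem (fun m => ?_) f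
  rcases eq_or_ne m i with rfl | hm
  · simp
  · simp [hm]

theorem X_sub_X_dvd_det_X_pow {n : Type*} [Fintype n] [DecidableEq n] (c : n → ℕ) {i j : n}
    (hij : i ≠ j) : (X i - X j : MvPolynomial n R) ∣ (Matrix.of fun a b => X a ^ c b).det := by
  refine X_sub_X_dvd_of_aeval_update_eq_zero ?_
  rw [AlgHom.map_det]
  refine Matrix.det_zero_of_row_eq hij ?_
  ext b
  simp [hij.symm]

theorem prime_X_sub_X [IsDomain R] {i j : σ} (hij : i ≠ j) :
    Prime (X i - X j : MvPolynomial σ R) := by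
  classical
  let shear : MvPolynomial σ R ≃ₐ[R] MvPolynomial σ R :=
    AlgEquiv.ofAlgHom (aeval (Function.update X i (X i - X j)))
      (aeval (Function.update X i (X i + X j)))
      (by ext m; rcases eq_or_ne m i with rfl | hm <;> simp [*, hij.symm])
      (by ext m; rcases eq_or_ne m i with rfl | hm <;> simp [*, hij.symm])
  have hshear : shear (X i) = X i - X j := by simp [shear]
  rw [← hshear, MulEquiv.prime_iff shear]
  exact X_prime

theorem eq_of_X_sub_X_dvd [Nontrivial R] [LinearOrder σ] {i j i' j' : σ} (hij : i < j)
    (hij' : i' < j') (h : (X i - X j : MvPolynomial σ R) ∣ X i' - X j') : i = i' ∧ j = j' := by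
  -- `X i - X j` vanishes at the indicator function of `{i, j, t}`, hence so does `X i' - X j'`.
  have hzero : ∀ t : σ, (i' = i ∨ i' = j ∨ i' = t) ↔ (j' = i ∨ j' = j ∨ j' = t) := by
    intro t
    obtain ⟨q, hq⟩ := h
    have := congrArg (eval fun m => if m = i ∨ m = j ∨ m = t then (1 : R) else 0) hq
    simp only [map_sub, map_mul, eval_X] at this
    split_ifs at this <;> simp_all
  have hj' := (hzero i').mp (Or.inr (Or.inr rfl))
  have hi' := (hzero j').mpr (Or.inr (Or.inr rfl))
  grind

theorem isRelPrime_X_sub_X [IsDomain R] [LinearOrder σ] {i j i' j' : σ} (hij : i < j)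
    (hij' : i' < j') (hne : (i, j) ≠ (i', j')) :
    IsRelPrime (X i - X j : MvPolynomial σ R) (X i' - X j') := by
  rw [(prime_X_sub_X hij.ne).irreducible.isRelPrime_iff_not_dvd]
  intro h
  obtain ⟨rfl, rfl⟩ := eq_of_X_sub_X_dvd hij hij' h
  exact hne rfl

theorem prod_X_sub_X_dvd_det_X_pow [IsDomain R] [UniqueFactorizationMonoid R] {k : ℕ}
    (c : Fin k → ℕ) :
    (∏ i, ∏ j ∈ Ioi i, (X i - X j : MvPolynomial (Fin k) R)) ∣
      (Matrix.of fun a b => X a ^ c b).det := by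
  rw [prod_sigma']
  refine prod_dvd_of_isRelPrime ?_ fun e he =>
    X_sub_X_dvd_det_X_pow c (mem_Ioi.mp (mem_sigma.mp he).2).ne
  intro e he e' he' hne
  exact isRelPrime_X_sub_X (mem_Ioi.mp (mem_sigma.mp he).2) (mem_Ioi.mp (mem_sigma.mp he').2)
    fun h => hne (Sigma.ext (congrArg Prod.fst h) (heq_of_eq (congrArg Prod.snd h)))

theorem eval_one_ne_zero_of_det_X_pow_eq [IsDomain R] {k : ℕ} {c : Fin k → ℕ}
    (hc : ∀ i j : Fin k, i < j → (c i : R) ≠ c j) {s : MvPolynomial (Fin k) R}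
    (hs : (Matrix.of fun a b => X a ^ c b).det = (∏ i, ∏ j ∈ Ioi i, (X i - X j)) * s) :
    eval (fun _ => 1) s ≠ 0 := by
  set ψ : MvPolynomial (Fin k) R →ₐ[R] Polynomial R := aeval fun i => Polynomial.X ^ (i : ℕ)
  have hdet : ψ (Matrix.of fun a b => X a ^ c b).det =
      ∏ i, ∏ j ∈ Ioi i, (Polynomial.X ^ c j - Polynomial.X ^ c i) := by
    rw [AlgHom.map_det, ← Matrix.det_vandermonde, ← Matrix.det_transpose]
    congr 1
    ext a b
    simp [ψ, Matrix.vandermonde_apply, ← pow_mul, mul_comm]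
  have hV : ψ (∏ i, ∏ j ∈ Ioi i, (X i - X j)) =
      ∏ i : Fin k, ∏ j ∈ Ioi i, (Polynomial.X ^ (i : ℕ) - Polynomial.X ^ (j : ℕ)) := by
    simp [ψ]
  obtain ⟨q₁, hq₁, hq₁1⟩ := Polynomial.exists_prod_prod_X_pow_sub_X_pow_eq (R := R) univ Ioi
    (fun i j => c j) (fun i j => c i)
  obtain ⟨q₂, hq₂, -⟩ := Polynomial.exists_prod_prod_X_pow_sub_X_pow_eq (R := R) univ Ioi
    (fun (i j : Fin k) => (i : ℕ)) (fun i j => (j : ℕ))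
  have hcancel : q₁ = q₂ * ψ s := by
    have hX : (Polynomial.X - 1 : Polynomial R) ≠ 0 := by
      simpa using Polynomial.X_sub_C_ne_zero (1 : R)
    refine mul_left_cancel₀ (pow_ne_zero (∑ i : Fin k, #(Ioi i)) hX) ?_
    rw [← hq₁, ← mul_assoc, ← hq₂, ← hdet, ← hV, ← map_mul, hs]
  have heval : (ψ s).eval 1 = eval (fun _ => 1) s := by
    rw [← Polynomial.coe_aeval_eq_eval, ← AlgHom.comp_apply, comp_aeval, ← coe_aeval_eq_eval]
    simp
  intro h0
  have := congrArg (Polynomial.eval 1) hcancel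
  rw [Polynomial.eval_mul, heval, h0, mul_zero, hq₁1] at this
  exact prod_ne_zero_iff.mpr (fun i _ => prod_ne_zero_iff.mpr fun j hj =>
    sub_ne_zero.mpr (hc i j (mem_Ioi.mp hj)).symm) this

theorem exists_det_X_pow_eq_prod_X_sub_X_mul [IsDomain R] [UniqueFactorizationMonoid R]
    {k : ℕ} (c : Fin k → ℕ) (hc : ∀ i j : Fin k, i < j → (c i : R) ≠ c j) :
    ∃ s : MvPolynomial (Fin k) R,
      (Matrix.of fun a b => X a ^ c b).det = (∏ i, ∏ j ∈ Ioi i, (X i - X j)) * s ∧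
        eval (fun _ => 1) s ≠ 0 :=
  let ⟨s, hs⟩ := prod_X_sub_X_dvd_det_X_pow c
  ⟨s, hs, eval_one_ne_zero_of_det_X_pow_eq hc hs⟩

end MvPolynomial

theorem MonoidAlgebra.isNilpotent_of_sub_one {K G : Type*} [CommRing K] [CommMonoid G] (p : ℕ)
    [Fact p.Prime] [CharP K p] {g : G} (hg : g ^ p = 1) : IsNilpotent (of K G g - 1) := by
  have : CharP (MonoidAlgebra K G) p := charP_of_injective_algebraMap' K p
  exact ⟨p, by rw [sub_pow_char, ← map_pow, hg, map_one, one_pow, sub_self]⟩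

theorem ZMod.natCast_sub_ne_natCast_sub {p a b : ℕ} (hab : a < b) (hb : b < p) :
    ((p - a : ℕ) : ZMod p) ≠ (p - b : ℕ) := by
  rw [Nat.cast_sub (hab.trans hb).le, Nat.cast_sub hb.le, ZMod.natCast_self, zero_sub, zero_sub,
    Ne, neg_inj, ZMod.natCast_eq_natCast_iff', Nat.mod_eq_of_lt (hab.trans hb),
    Nat.mod_eq_of_lt hb]
  exact hab.ne

open MvPolynomial in
theorem det_generalized_vandermonde_group_algebra_general (p k : ℕ) [Fact p.Prime]
    (b : Fin k → ℕ) (hb : StrictMono b) (hbp : ∀ j, b j ≤ p - 1) :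
    ∃ w : MonoidAlgebra (ZMod p) (Multiplicative (Fin k → ZMod p)), IsUnit w ∧
      Matrix.det (Matrix.of fun i j : Fin k =>
        (MonoidAlgebra.of (ZMod p) (Multiplicative (Fin k → ZMod p))
            (Multiplicative.ofAdd (Pi.single i 1))) ^ (p - b j)) =
      w * ∏ i : Fin k, ∏ j ∈ Finset.Ioi i,
        ((MonoidAlgebra.of (ZMod p) (Multiplicative (Fin k → ZMod p))
            (Multiplicative.ofAdd (Pi.single i 1))) -
         (MonoidAlgebra.of (ZMod p) (Multiplicative (Fin k → ZMod p))
            (Multiplicative.ofAdd (Pi.single j 1)))) := by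
  set G := Multiplicative (Fin k → ZMod p)
  set x : Fin k → MonoidAlgebra (ZMod p) G := fun i =>
    MonoidAlgebra.of (ZMod p) G (Multiplicative.ofAdd (Pi.single i 1))
  have hb_lt : ∀ j, b j < p := fun j => by have := (Fact.out : p.Prime).pos; grind
  obtain ⟨s, hs, hs1⟩ := exists_det_X_pow_eq_prod_X_sub_X_mul (R := ZMod p) (fun j => p - b j)
    fun i j hij => ZMod.natCast_sub_ne_natCast_sub (hb hij) (hb_lt j)
  have hx : ∀ i, IsNilpotent (x i - 1) := fun i => MonoidAlgebra.isNilpotent_of_sub_one p <| by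
    rw [← ofAdd_nsmul, show p • (Pi.single i 1 : Fin k → ZMod p) = 0 by ext; simp, ofAdd_zero]
  refine ⟨aeval x s, isUnit_aeval_of_isNilpotent_sub hx ?_, ?_⟩
  · rw [show (fun _ => 1 : Fin k → MonoidAlgebra (ZMod p) G) = algebraMap (ZMod p) _ ∘ fun _ => 1
      from funext fun _ => (map_one _).symm, aeval_algebraMap_apply]
    exact hs1.isUnit.map _
  · have hmap := congrArg (aeval x) hs
    simp only [AlgHom.map_det, map_mul, map_prod, map_sub, aeval_X] at hmap
    rw [mul_comm, ← hmap]
    congr 1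
    ext i j
    simp [x]

/-- Let `G = C_p^k` with generators `x_1,…,x_k` and let `0 ≤ b_1 < … < b_k ≤ p-1`.
In `𝔽_p[G]`, the determinant of the matrix `N_β(i,j) = x_i^{-b_j}` (where
`x^{-b}` means `x^{p-b}`) equals `w_β · ∏_{1≤i<j≤k}(x_i - x_j)` with `w_β` a unit. -/
theorem det_generalized_vandermonde_group_algebra (p k : ℕ) (hp : p.Prime) [Fact p.Prime]
    (hk : k < p) (b : Fin k → ℕ) (hb : StrictMono b) (hbp : ∀ j, b j ≤ p - 1) :
    ∃ w : MonoidAlgebra (ZMod p) (Multiplicative (Fin k → ZMod p)), IsUnit w ∧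
      Matrix.det (Matrix.of fun i j : Fin k =>
        (MonoidAlgebra.of (ZMod p) (Multiplicative (Fin k → ZMod p))
            (Multiplicative.ofAdd (Pi.single i 1))) ^ (p - b j)) =
      w * ∏ i : Fin k, ∏ j ∈ Finset.Ioi i,
        ((MonoidAlgebra.of (ZMod p) (Multiplicative (Fin k → ZMod p))
            (Multiplicative.ofAdd (Pi.single i 1))) -
         (MonoidAlgebra.of (ZMod p) (Multiplicative (Fin k → ZMod p))
            (Multiplicative.ofAdd (Pi.single j 1)))) :=
  det_generalized_vandermonde_group_algebra_general p k b hb hbp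
end

section
/- Fix α = (α_1 < α_2 < … < α_k) a strictly increasing sequence of nonnegative integers, and let L = {i ∈ [1,k-1] : α_i + 1 < α_{i+1}} = {ℓ_1 < … < ℓ_{t-1}}, with ℓ_0 = 0, ℓ_t = k, and A_i = [ℓ_{i-1}+1, ℓ_i]. Then for any injective tuple γ ∈ ℕ^k and permutation σ ∈ S_k, the following are equivalent: (1) the set {γ_1,…,γ_k} precedes or equals {α_1,…,α_k} in lexicographic order and γ_j - σ(j) = α_j - j for all j; (2) σ lies in the Young subgroup S_{A_1} × ⋯ × S_{A_t} and γ_j = α_{σ(j)} for all j. -/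
/-!
Put `c j = α j - j`. Since `α` is strictly increasing, `c` is monotone, and it is constant
exactly on the blocks `A_i`. The linear condition says `γ j = c j + σ j`, so
`∑ 2^{-γ_j} = ∑ 2^{-c_j} 2^{-σ(j)}`; by the rearrangement inequality this is at most
`∑ 2^{-c_j} 2^{-j} = ∑ 2^{-α_j}`, with equality only if `c` monovaries with `σ`. As `c` is
monotone, `c ∘ σ⁻¹` is then a monotone rearrangement of `c`, hence equal to `c`: `σ` preserves
the blocks.
-/

open Equiv

theorem StrictMono.monotone_sub_val {k : ℕ} {α : Fin k → ℤ} (hα : StrictMono α) :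
    Monotone fun i : Fin k => α i - i := by
  refine (monotone_iff_forall_covBy _).2 fun a b hab => ?_
  have hval : (b : ℕ) = a + 1 := (Nat.covBy_iff_add_one_eq.1 (Fin.covBy_iff.1 hab)).symm
  have hlt : α a < α b := hα hab.lt
  simp only [hval]
  push_cast
  omega

theorem Fin.apply_eq_apply_of_forall_succ {β : Type*} {k : ℕ} {f : Fin k → β} {a b : Fin k}
    (hab : a ≤ b)
    (h : ∀ m : Fin k, ∀ hm : (m : ℕ) + 1 < k, a ≤ m → m < b → f ⟨m + 1, hm⟩ = f m) :
    f a = f b := by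
  have key : ∀ n, (a : ℕ) ≤ n → ∀ hn : n < k, n ≤ b → f ⟨n, hn⟩ = f a := by
    intro n han
    induction n, han using Nat.le_induction with
    | base => exact fun _ _ => rfl
    | succ n han ih =>
      intro hn hnb
      rw [h ⟨n, by omega⟩ hn han (Fin.lt_def.2 (by simp only; omega))]
      exact ih _ (by omega)
  exact (key b hab b.isLt le_rfl).symm

theorem Monotone.apply_eq_apply_iff_forall_succ {β : Type*} [PartialOrder β] {k : ℕ}
    {f : Fin k → β} (hf : Monotone f) {a b : Fin k} (hab : a ≤ b) :
    f a = f b ↔ ∀ m : Fin k, ∀ hm : (m : ℕ) + 1 < k, a ≤ m → m < b → f ⟨m + 1, hm⟩ = f m := by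
  refine ⟨fun heq m hm ham hmb => ?_, Fin.apply_eq_apply_of_forall_succ hab⟩
  have hsucc : m < ⟨m + 1, hm⟩ := Fin.lt_def.2 (by simp)
  refine le_antisymm ?_ (hf hsucc.le)
  calc f ⟨m + 1, hm⟩ ≤ f b := hf (Fin.le_def.2 (by simp only; omega))
    _ = f a := heq.symm
    _ ≤ f m := hf ham

theorem StrictMono.forall_succ_eq_add_one_iff {k : ℕ} {α : Fin k → ℕ} (hα : StrictMono α)
    (a b : Fin k) :
    (∀ m : Fin k, ∀ hm : (m : ℕ) + 1 < k, min (a : ℕ) b ≤ m → (m : ℕ) < max (a : ℕ) b →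
        α ⟨m + 1, hm⟩ = α m + 1) ↔
      (α a : ℤ) - a = α b - b := by
  wlog hab : a ≤ b generalizing a b
  · rw [min_comm, max_comm, eq_comm]
    exact this b a (le_of_not_ge hab)
  have hc : Monotone fun i : Fin k => (α i : ℤ) - i :=
    (Nat.strictMono_cast.comp hα).monotone_sub_val
  rw [hc.apply_eq_apply_iff_forall_succ hab]
  simp only [Fin.le_def, Fin.lt_def, min_eq_left (Fin.le_def.1 hab),
    max_eq_right (Fin.le_def.1 hab)]
  refine forall_congr' fun m => forall_congr' fun hm => forall_congr' fun _ =>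
    forall_congr' fun _ => ?_
  push_cast
  omega

section Rearrangement

variable {K : Type*} [Field K] [LinearOrder K] [IsStrictOrderedRing K] {b : K} {n : ℕ}
  {c : Fin n → ℤ} {σ : Perm (Fin n)}

theorem monovary_of_sum_zpow_le (hb₀ : 0 < b) (hb₁ : b < 1) (hc : Monotone c)
    (h : ∑ i, b ^ (c i + i) ≤ ∑ i, b ^ (c i + σ i)) : Monovary c σ := by
  have hb := zpow_right_strictAnti₀ hb₀ hb₁
  set f : Fin n → K := fun i => b ^ c i
  set g : Fin n → K := fun i => b ^ (i : ℤ)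
  have hfg : Monovary f g :=
    (hb.antitone.comp_monotone hc).monovary fun i j hij => hb.antitone (by exact_mod_cast hij)
  have hsum : ∑ i, f i • g (σ i) = ∑ i, f i • g i :=
    hfg.sum_smul_comp_perm_le_sum_smul.antisymm (by simpa [f, g, zpow_add₀ hb₀.ne'] using h)
  have hfgσ : Monovary f (g ∘ σ) := hfg.sum_smul_comp_perm_eq_sum_smul_iff.1 hsum
  exact fun i j hij => hb.le_iff_ge.1 (hfgσ (hb (by exact_mod_cast hij)))

end Rearrangement

theorem Monovary.comp_perm_eq_of_monotone {β : Type*} [PartialOrder β] {n : ℕ} {c : Fin n → β}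
    {σ : Perm (Fin n)} (hcσ : Monovary c σ) (hc : Monotone c) : c ∘ σ = c := by
  have hmono : Monotone (c ∘ σ.symm) := fun x y hxy => by
    rcases hxy.eq_or_lt with rfl | hlt
    · rfl
    · exact hcσ (by simpa using hlt)
  have := Tuple.unique_monotone (τ := 1) hmono hc
  ext j
  simpa using (congrFun this (σ j)).symm

theorem lex_young_characterization_general (k : ℕ) (α γ : Fin k → ℕ)
    (hα : StrictMono α) (σ : Equiv.Perm (Fin k)) :
    ((∑ i : Fin k, ((2 : ℚ)⁻¹) ^ (γ i) ≥ ∑ i : Fin k, ((2 : ℚ)⁻¹) ^ (α i)) ∧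
      ∀ j : Fin k, (γ j : ℤ) - ((σ j : ℕ) : ℤ) = (α j : ℤ) - ((j : ℕ) : ℤ)) ↔
    ((∀ j : Fin k, ∀ m : Fin k, ∀ hm : (m : ℕ) + 1 < k,
        min (j : ℕ) ((σ j : ℕ)) ≤ (m : ℕ) → (m : ℕ) < max (j : ℕ) ((σ j : ℕ)) →
          α ⟨(m : ℕ) + 1, hm⟩ = α m + 1) ∧
      ∀ j : Fin k, γ j = α (σ j)) := by
  set c : Fin k → ℤ := fun i => α i - i
  have hc : Monotone c := (Nat.strictMono_cast.comp hα).monotone_sub_val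
  simp only [hα.forall_succ_eq_add_one_iff]
  constructor
  · rintro ⟨hsum, hγ⟩
    have hγc : ∀ j, (γ j : ℤ) = c j + σ j := fun j => by simp only [c]; linarith [hγ j]
    have hmv : Monovary c σ := by
      refine monovary_of_sum_zpow_le (b := (2 : ℚ)⁻¹) (by norm_num) (by norm_num) hc ?_
      simpa [c, ← hγc] using hsum
    have hfix := congrFun (hmv.comp_perm_eq_of_monotone hc)
    refine ⟨fun j => (hfix j).symm, fun j => ?_⟩
    have := hfix j
    simp only [Function.comp_apply, c] at this
    linarith [hγc j]
  · rintro ⟨hblock, hγα⟩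
    refine ⟨?_, fun j => by rw [hγα j]; linarith [hblock j]⟩
    simp only [hγα, ge_iff_le]
    exact (Equiv.sum_comp σ fun i => (2⁻¹ : ℚ) ^ α i).ge

/-- Fix a strictly increasing sequence `α` of `k` nonnegative integers (0-indexed).
For an injective tuple `γ ∈ ℕ^k` and a permutation `σ ∈ S_k`, the following are
equivalent:
(1) the set `{γ_1,…,γ_k}` precedes or equals `{α_1,…,α_k}` lexicographically
(i.e. `∑ 2^{-γ_i} ≥ ∑ 2^{-α_i}`) and `γ_j - σ(j) = α_j - j` for all `j`;
(2) `σ` lies in the Young subgroup determined by the maximal gap-free blocks of `α`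
(equivalently, for every `j` there is no index `m` with `min(j,σ(j)) ≤ m < max(j,σ(j))`
and `α_{m+1} > α_m + 1`), and `γ_j = α_{σ(j)}` for all `j`. -/
theorem lex_young_characterization (k : ℕ) (α γ : Fin k → ℕ)
    (hα : StrictMono α) (hγ : Function.Injective γ) (σ : Equiv.Perm (Fin k)) :
    ((∑ i : Fin k, ((2 : ℚ)⁻¹) ^ (γ i) ≥ ∑ i : Fin k, ((2 : ℚ)⁻¹) ^ (α i)) ∧
      ∀ j : Fin k, (γ j : ℤ) - ((σ j : ℕ) : ℤ) = (α j : ℤ) - ((j : ℕ) : ℤ)) ↔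
    ((∀ j : Fin k, ∀ m : Fin k, ∀ hm : (m : ℕ) + 1 < k,
        min (j : ℕ) ((σ j : ℕ)) ≤ (m : ℕ) → (m : ℕ) < max (j : ℕ) ((σ j : ℕ)) →
          α ⟨(m : ℕ) + 1, hm⟩ = α m + 1) ∧
      ∀ j : Fin k, γ j = α (σ j)) :=
  lex_young_characterization_general k α γ hα σ
end

section
/- (Chebotarëv) Let p be prime and ω ∈ ℂ a primitive p-th root of unity. Then every square submatrix of the p×p matrix [ω^{ij}]_{0≤i,j≤p-1} is nonsingular; equivalently, for any 0 ≤ b_1 < … < b_k ≤ p-1 and 0 ≤ a_1 < … < a_k ≤ p-1 with k ≤ p, det([ω^{b_i a_j}]) ≠ 0. -/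
/-!
Work in `ℤ[ζ] = ℤ[X]/(Φ_p)`, which embeds into `ℂ` via `ζ ↦ ω`, and reduce modulo the prime
`ζ - 1`, whose residue field is `𝔽_p` and where `ζ ↦ 1`. If the determinant vanished, a kernel
vector `v` could be scaled so that not every `v_j` is divisible by `ζ - 1`. The polynomial
`∑ v_j X^{a_j}` vanishes at the `k` distinct points `ζ^{b_i}`, so `(X - 1)^k` divides its
reduction, a nonzero polynomial over `𝔽_p` with at most `k` terms, all of degree `< p`. That is
impossible: the operator `X d/dX - a_1` deletes one term and lowers the order of vanishing at `1`
by at most one, while leaving the other terms nonzero since their degrees differ mod `p`.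
-/

open Polynomial Finset
open scoped Matrix

namespace Polynomial

variable {R : Type*} [CommRing R]

theorem coeff_X_mul_derivative_sub_C_mul (f : R[X]) (m n : ℕ) :
    (X * derivative f - C (m : R) * f).coeff n = f.coeff n * (n - m) := by
  cases n with
  | zero => simp [mul_comm]
  | succ n =>
    rw [coeff_sub, coeff_X_mul, coeff_derivative, coeff_C_mul]
    push_cast
    ring

theorem eq_zero_of_X_sub_one_pow_dvd [IsDomain R] {p : ℕ} [CharP R p] {k : ℕ} {f : R[X]}
    (hcard : #f.support ≤ k) (hsupp : f.support ⊆ range p) (hdvd : (X - 1) ^ k ∣ f) :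
    f = 0 := by
  induction k generalizing f with
  | zero => simpa using hcard
  | succ k ih =>
    by_contra hf
    obtain ⟨m, hm⟩ := support_nonempty.2 hf
    set g := X * derivative f - C (m : R) * f
    have hgsupp : g.support ⊆ f.support.erase m := by
      intro n hn
      rw [mem_support_iff, coeff_X_mul_derivative_sub_C_mul] at hn
      exact mem_erase.2 ⟨fun h => hn (by simp [h]), mem_support_iff.2 (left_ne_zero_of_mul hn)⟩
    have hg : g = 0 := by
      refine ih ?_ (hgsupp.trans ((erase_subset _ _).trans hsupp)) ?_
      · exact (card_le_card hgsupp).trans (by rw [card_erase_of_mem hm]; omega)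
      · exact dvd_sub ((pow_sub_one_dvd_derivative_of_pow_dvd hdvd).mul_left _)
          (((pow_dvd_pow _ k.le_succ).trans hdvd).mul_left _)
    have hmonomial : f = monomial m (f.coeff m) := by
      ext n
      rw [coeff_monomial]
      split_ifs with h
      · rw [h]
      by_contra hn
      have h0 : f.coeff n * ((n : R) - m) = 0 := by
        rw [← coeff_X_mul_derivative_sub_C_mul]
        change g.coeff n = 0
        rw [hg, coeff_zero]
      have hnm : (n : R) = m := sub_eq_zero.1 ((mul_eq_zero.1 h0).resolve_left hn)
      exact h (((CharP.natCast_eq_natCast R p).1 hnm).eq_of_lt_of_lt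
        (mem_range.1 (hsupp (mem_support_iff.2 hn))) (mem_range.1 (hsupp hm))).symm
    have hroot : f.eval 1 = 0 := by
      obtain ⟨q, hq⟩ := (dvd_pow_self _ k.succ_ne_zero).trans hdvd
      simp [hq]
    rw [hmonomial, eval_monomial, one_pow, mul_one] at hroot
    exact mem_support_iff.1 hm hroot

theorem prod_X_sub_C_dvd_of_isRoot [IsDomain R] {ι : Type*} [Fintype ι] {r : ι → R}
    (hr : Function.Injective r) {f : R[X]} (hf : ∀ i, f.IsRoot (r i)) :
    ∏ i, (X - C (r i)) ∣ f := by
  rcases eq_or_ne f 0 with rfl | hf0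
  · exact dvd_zero _
  have hprod : ∏ i, (X - C (r i)) = ((univ.val.map r).map fun a => X - C a).prod := by
    rw [Multiset.map_map]; rfl
  rw [hprod, Multiset.prod_X_sub_C_dvd_iff_le_roots hf0, Multiset.le_iff_subset (univ.nodup.map hr)]
  intro x hx
  obtain ⟨i, -, rfl⟩ := Multiset.mem_map.1 hx
  exact (mem_roots hf0).2 (hf i)

theorem support_sum_monomial_subset {ι : Type*} (s : Finset ι) (e : ι → ℕ) (c : ι → R) :
    (∑ j ∈ s, monomial (e j) (c j)).support ⊆ s.image e := by
  intro n hn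
  rw [mem_support_iff, finsetSum_coeff] at hn
  obtain ⟨j, hj, hjn⟩ := exists_ne_zero_of_sum_ne_zero hn
  rw [coeff_monomial] at hjn
  exact mem_image.2 ⟨j, hj, by_contra fun h => hjn (if_neg h)⟩

theorem coeff_sum_monomial_of_injective {ι : Type*} [Fintype ι] {e : ι → ℕ}
    (he : Function.Injective e) (c : ι → R) (j : ι) :
    (∑ i, monomial (e i) (c i)).coeff (e j) = c j := by
  rw [finsetSum_coeff, Finset.sum_eq_single j
    (fun i _ hij => by simp [coeff_monomial, he.ne hij]) (by simp)]
  simp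

end Polynomial

namespace Matrix

/-- Dividing a kernel vector by `π` gives again a kernel vector, so every entry of a nonzero one
would be divisible by all powers of `π`. -/
theorem eq_zero_of_mulVec_eq_zero_of_forall_dvd {R : Type*} [CommRing R] [IsDomain R]
    [WfDvdMonoid R] {m n : Type*} [Fintype n] {M : Matrix m n R} {π : R} (hπ : ¬IsUnit π)
    (hdvd : ∀ v, M *ᵥ v = 0 → ∀ j, π ∣ v j) {v : n → R} (hv : M *ᵥ v = 0) : v = 0 := by
  have hpow : ∀ t (v : n → R), M *ᵥ v = 0 → ∀ j, π ^ t ∣ v j := by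
    intro t
    induction t with
    | zero => simp
    | succ t ih =>
      intro v hv j
      choose w hw using hdvd v hv
      have hvw : v = π • w := funext hw
      rcases eq_or_ne π 0 with rfl | hπ0
      · simp [hvw]
      have hw0 : M *ᵥ w = 0 := by
        rw [hvw, mulVec_smul] at hv
        exact (smul_eq_zero.1 hv).resolve_left hπ0
      rw [hw j, pow_succ']
      exact mul_dvd_mul_left π (ih w hw0 j)
  funext j
  by_contra hj
  obtain ⟨t, ht⟩ := FiniteMultiplicity.of_not_isUnit hπ hj
  exact ht (hpow (t + 1) v hv j)

end Matrix

section Reduction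

variable {R F : Type*} [CommRing R] [IsDomain R] [CommRing F] [IsDomain F] {p : ℕ} [CharP F p]
  {ι : Type*} [Fintype ι] (ε : R →+* F) {θ : R}

theorem map_eq_zero_of_mulVec_pow_mul_eq_zero (hθ : IsPrimitiveRoot θ p) (hεθ : ε θ = 1)
    {b a : ι → ℕ} (hb : Function.Injective b) (ha : Function.Injective a) (hbp : ∀ i, b i < p)
    (hap : ∀ j, a j < p) {v : ι → R} (hv : Matrix.of (fun i j => θ ^ (b i * a j)) *ᵥ v = 0)
    (j : ι) : ε (v j) = 0 := by
  classical
  set f := ∑ j, monomial (a j) (v j)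
  have hroot : ∀ i, f.IsRoot (θ ^ b i) := fun i => by
    simpa [f, eval_finsetSum, Matrix.mulVec, dotProduct, ← pow_mul, mul_comm]
      using congrFun hv i
  have hdvd := Polynomial.map_dvd ε <|
    prod_X_sub_C_dvd_of_isRoot (fun i i' h => hb (hθ.pow_inj (hbp i) (hbp i') h)) hroot
  have hprod : (∏ i, (X - C (θ ^ b i))).map ε = (X - 1) ^ Fintype.card ι := by
    simp [Polynomial.map_prod, hεθ]
  have hf : f.map ε = ∑ j, monomial (a j) (ε (v j)) := by
    simp [f, Polynomial.map_sum]
  rw [hprod, hf] at hdvd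
  have hzero := eq_zero_of_X_sub_one_pow_dvd
    ((card_le_card (support_sum_monomial_subset _ _ _)).trans card_image_le)
    ((support_sum_monomial_subset _ _ _).trans fun n hn => by
      obtain ⟨j, -, rfl⟩ := mem_image.1 hn
      exact mem_range.2 (hap j)) hdvd
  simpa [hzero] using (coeff_sum_monomial_of_injective ha (fun j => ε (v j)) j).symm

theorem det_of_pow_mul_ne_zero [WfDvdMonoid R] [DecidableEq ι] (hθ : IsPrimitiveRoot θ p)
    (hεθ : ε θ = 1) (hker : ∀ x, ε x = 0 → θ - 1 ∣ x) {b a : ι → ℕ}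
    (hb : Function.Injective b) (ha : Function.Injective a) (hbp : ∀ i, b i < p)
    (hap : ∀ j, a j < p) : (Matrix.of fun i j => θ ^ (b i * a j)).det ≠ 0 := by
  have hunit : ¬IsUnit (θ - 1) := fun h => by simpa [hεθ] using h.map ε
  intro hdet
  obtain ⟨v, hv0, hv⟩ := Matrix.exists_mulVec_eq_zero_iff.2 hdet
  exact hv0 <| Matrix.eq_zero_of_mulVec_eq_zero_of_forall_dvd hunit
    (fun w hw j => hker _ (map_eq_zero_of_mulVec_pow_mul_eq_zero ε hθ hεθ hb ha hbp hap hw j)) hv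

end Reduction

theorem IsPrimitiveRoot.eval₂_cyclotomic_eq_zero {K : Type*} [CommRing K] [IsDomain K] {n : ℕ}
    [NeZero n] {ω : K} (hω : IsPrimitiveRoot ω n) :
    (cyclotomic n ℤ).eval₂ (Int.castRingHom K) ω = 0 := by
  rw [eval₂_eq_eval_map, map_cyclotomic]
  exact hω.isRoot_cyclotomic (NeZero.pos n)

namespace AdjoinRoot

instance isDomain_cyclotomic (n : ℕ) [NeZero n] : IsDomain (AdjoinRoot (cyclotomic n ℤ)) :=
  isDomain_of_prime (cyclotomic.irreducible (NeZero.pos n)).prime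

theorem lift_cyclotomic_injective {K : Type*} [Field K] [CharZero K] {n : ℕ} [NeZero n]
    {ω : K} (hω : IsPrimitiveRoot ω n) :
    Function.Injective (lift (Int.castRingHom K) ω hω.eval₂_cyclotomic_eq_zero) := by
  refine (injective_iff_map_eq_zero _).2 fun x hx => ?_
  induction x using AdjoinRoot.induction_on with | ih g => ?_
  rw [lift_mk] at hx
  rw [mk_eq_zero, cyclotomic_eq_minpoly hω (NeZero.pos n),
    ← minpoly.isIntegrallyClosed_dvd_iff (hω.isIntegral (NeZero.pos n))]
  simpa [aeval_def] using hx

theorem isPrimitiveRoot_root_cyclotomic (n : ℕ) [NeZero n] :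
    IsPrimitiveRoot (root (cyclotomic n ℤ)) n := by
  have hω := Complex.isPrimitiveRoot_exp n (NeZero.ne n)
  refine IsPrimitiveRoot.of_map_of_injective ?_ (lift_cyclotomic_injective hω)
  rwa [lift_root]

variable (p : ℕ) [Fact p.Prime]

/-- Reduction of `ℤ[ζ_p]` modulo the prime `ζ_p - 1`, whose residue field is `ZMod p`;
it is well defined because `Φ_p(1) = p`. -/
noncomputable def cyclotomicReduction : AdjoinRoot (cyclotomic p ℤ) →+* ZMod p :=
  lift (Int.castRingHom (ZMod p)) 1 (by simp [eval₂_at_one, eval_one_cyclotomic_prime])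

theorem cyclotomicReduction_root : cyclotomicReduction p (root _) = 1 :=
  lift_root _

theorem root_sub_one_dvd_of_cyclotomicReduction_eq_zero {x : AdjoinRoot (cyclotomic p ℤ)}
    (hx : cyclotomicReduction p x = 0) : root (cyclotomic p ℤ) - 1 ∣ x := by
  induction x using AdjoinRoot.induction_on with | ih g => ?_
  obtain ⟨m, hm⟩ : (p : ℤ) ∣ g.eval 1 := by
    rw [← ZMod.intCast_zmod_eq_zero_iff_dvd]
    simpa [cyclotomicReduction, eval₂_at_one] using hx
  have hsub : root (cyclotomic p ℤ) - 1 ∣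
      mk _ g - ((g.eval 1 : ℤ) : AdjoinRoot (cyclotomic p ℤ)) := by
    simpa using map_dvd (mk _) (X_sub_C_dvd_sub_C_eval (a := 1) (p := g))
  have hp : root (cyclotomic p ℤ) - 1 ∣ ((g.eval 1 : ℤ) : AdjoinRoot (cyclotomic p ℤ)) := by
    rw [hm]
    push_cast
    exact dvd_mul_of_dvd_left ((isPrimitiveRoot_root_cyclotomic p).sub_one_dvd_natCast
      (Fact.out : p.Prime).one_lt) _
  simpa using dvd_add hsub hp

end AdjoinRoot

theorem chebotarev_fourier_submatrix_general (p k : ℕ) (hp : p.Prime)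
    (ω : ℂ) (hω : IsPrimitiveRoot ω p)
    (b a : Fin k → ℕ) (hb : StrictMono b) (ha : StrictMono a)
    (hbp : ∀ i, b i ≤ p - 1) (hap : ∀ i, a i ≤ p - 1) :
    Matrix.det (Matrix.of fun i j : Fin k => ω ^ (b i * a j)) ≠ 0 := by
  have := Fact.mk hp
  have hdet := det_of_pow_mul_ne_zero (AdjoinRoot.cyclotomicReduction p)
    (AdjoinRoot.isPrimitiveRoot_root_cyclotomic p) (AdjoinRoot.cyclotomicReduction_root p)
    (fun _ => AdjoinRoot.root_sub_one_dvd_of_cyclotomicReduction_eq_zero p)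
    hb.injective ha.injective (fun i => Nat.lt_of_le_sub_one hp.pos (hbp i))
    (fun j => Nat.lt_of_le_sub_one hp.pos (hap j))
  set φ := AdjoinRoot.lift (Int.castRingHom ℂ) ω hω.eval₂_cyclotomic_eq_zero
  have hmap : (Matrix.of fun i j : Fin k => AdjoinRoot.root (cyclotomic p ℤ) ^ (b i * a j)).map φ
      = Matrix.of fun i j => ω ^ (b i * a j) := by
    ext
    simp [φ]
  rw [← hmap, ← RingHom.mapMatrix_apply, ← RingHom.map_det]
  exact (map_ne_zero_iff φ (AdjoinRoot.lift_cyclotomic_injective hω)).2 hdet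

/-- Chebotarëv's theorem: if `p` is prime and `ω ∈ ℂ` is a primitive `p`-th root of
unity, then every square submatrix of the `p×p` Fourier matrix `[ω^{ij}]` is
nonsingular: for `0 ≤ b_1 < … < b_k ≤ p-1` and `0 ≤ a_1 < … < a_k ≤ p-1` with `k ≤ p`,
`det([ω^{b_i a_j}]) ≠ 0`. -/
theorem chebotarev_fourier_submatrix (p k : ℕ) (hp : p.Prime) (hk : k ≤ p)
    (ω : ℂ) (hω : IsPrimitiveRoot ω p)
    (b a : Fin k → ℕ) (hb : StrictMono b) (ha : StrictMono a)
    (hbp : ∀ i, b i ≤ p - 1) (hap : ∀ i, a i ≤ p - 1) :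
    Matrix.det (Matrix.of fun i j : Fin k => ω ^ (b i * a j)) ≠ 0 :=
  chebotarev_fourier_submatrix_general p k hp ω hω b a hb ha hbp hap
end

section
/- (Frenkel's lemma) Let p be prime, 𝔽 a field of characteristic p, and g(x) = ∑_{i=1}^m λ_i x^{a_i} ∈ 𝔽[x] a nonzero polynomial with m distinct exponents 0 ≤ a_1 < … < a_m ≤ p-1. Then the multiplicity of 1 as a root of g is at most m-1. -/
open Polynomial

lemma mulXderiv {𝔽 : Type} [Field 𝔽] (l : 𝔽) (n : ℕ) :
    X * derivative (C l * X ^ n) = C (l * n) * X ^ n := by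
  cases n with
  | zero => simp
  | succ k =>
    simp [derivative_C_mul, derivative_X_pow, C_mul]
    ring

lemma coeff_sum_CX {𝔽 : Type} [Field 𝔽] {m : ℕ} (a : Fin m → ℕ)
    (ha : Function.Injective a) (c : Fin m → 𝔽) (j : Fin m) :
    (∑ i, C (c i) * X ^ a i).coeff (a j) = c j := by
  rw [finset_sum_coeff, Finset.sum_eq_single j]
  · simp [coeff_C_mul, coeff_X_pow]
  · intro i _ hij
    simp only [coeff_C_mul, coeff_X_pow]
    rw [if_neg (fun h => hij (ha h.symm)), mul_zero]
  · simp

lemma frenkel_aux (p : ℕ) (hp : p.Prime) (𝔽 : Type) [Field 𝔽] [CharP 𝔽 p] :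
    ∀ (m : ℕ) (a : Fin m → ℕ), StrictMono a → (∀ i, a i ≤ p - 1) →
    ∀ (lam : Fin m → 𝔽), (∑ i : Fin m, C (lam i) * X ^ a i) ≠ 0 →
    (∑ i : Fin m, C (lam i) * X ^ a i).rootMultiplicity 1 ≤ m - 1 := by
  intro m
  induction m with
  | zero => intro a _ _ lam hne; simp at hne
  | succ k IH =>
    intro a ha hap lam hne
    set g : 𝔽[X] := ∑ i : Fin (k+1), C (lam i) * X ^ a i with hgdef
    by_contra hcon
    push_neg at hcon
    have hmu : k + 1 ≤ g.rootMultiplicity 1 := by omega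
    have hdvd : (X - C (1:𝔽)) ^ (k+1) ∣ g :=
      (le_rootMultiplicity_iff hne).mp hmu
    by_cases hall : ∀ j : Fin k, lam j.succ = 0
    · -- g = C (lam 0) * X ^ a 0
      have hgeq : g = C (lam 0) * X ^ a 0 := by
        rw [hgdef, Fin.sum_univ_succ]
        simp [hall]
      have hl0 : lam 0 ≠ 0 := by
        intro h0; apply hne; rw [hgeq, h0]; simp
      have hroot : g.IsRoot 1 := by
        have : 0 < g.rootMultiplicity 1 := by omega
        exact (rootMultiplicity_pos hne).mp this
      rw [hgeq] at hroot
      simp [IsRoot] at hroot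
      exact hl0 hroot
    · push_neg at hall
      obtain ⟨j₀, hj₀⟩ := hall
      have hkpos : 0 < k := j₀.pos
      -- cast differences are nonzero
      have hcast : ∀ j : Fin k, ((a j.succ : 𝔽) - (a 0 : 𝔽)) ≠ 0 := by
        intro j
        have hlt : a 0 < a j.succ := ha (Fin.succ_pos j)
        have hle : a 0 ≤ a j.succ := le_of_lt hlt
        rw [← Nat.cast_sub hle]
        intro h0
        have := (CharP.cast_eq_zero_iff 𝔽 p _).mp h0
        have h1 : a j.succ - a 0 < p := by
          have := hap j.succ; have := hp.pos; omega
        have := Nat.le_of_dvd (by omega) this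
        omega
      set h : 𝔽[X] := X * derivative g - C ((a 0 : 𝔽)) * g with hhdef
      have hform : h = ∑ i : Fin (k+1),
          C (lam i * ((a i : 𝔽) - (a 0 : 𝔽))) * X ^ a i := by
        rw [hhdef, hgdef, derivative_sum, Finset.mul_sum, Finset.mul_sum,
          ← Finset.sum_sub_distrib]
        refine Finset.sum_congr rfl (fun i _ => ?_)
        rw [mulXderiv]
        rw [show C ((a 0 : 𝔽)) * (C (lam i) * X ^ a i)
            = C ((a 0 : 𝔽) * lam i) * X ^ a i by rw [C_mul]; ring]
        rw [← sub_mul, ← C_sub]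
        ring_nf
      have hform2 : h = ∑ j : Fin k,
          C (lam j.succ * ((a j.succ : 𝔽) - (a 0 : 𝔽))) * X ^ a j.succ := by
        rw [hform, Fin.sum_univ_succ]
        simp
      have hmono : StrictMono (fun j : Fin k => a j.succ) :=
        fun i j hij => ha (Fin.succ_lt_succ_iff.mpr hij)
      have hne2 : (∑ j : Fin k,
          C (lam j.succ * ((a j.succ : 𝔽) - (a 0 : 𝔽))) * X ^ a j.succ) ≠ 0 := by
        intro h0
        have := coeff_sum_CX (fun j : Fin k => a j.succ) hmono.injective
          (fun j => lam j.succ * ((a j.succ : 𝔽) - (a 0 : 𝔽))) j₀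
        rw [h0] at this
        simp only [coeff_zero] at this
        exact (mul_ne_zero hj₀ (hcast j₀)) this.symm
      have hne3 : h ≠ 0 := by rw [hform2]; exact hne2
      -- (X - 1)^k divides h
      obtain ⟨q, hq⟩ := hdvd
      have hdvdh : (X - C (1:𝔽)) ^ k ∣ h := by
        have hdg : (X - C (1:𝔽)) ^ k ∣ derivative g := by
          rw [hq, derivative_mul, derivative_pow]
          simp only [Nat.add_sub_cancel]
          refine dvd_add ?_ ?_
          · exact Dvd.dvd.mul_right (Dvd.dvd.mul_right (dvd_mul_left _ _) _) _
          · exact Dvd.dvd.mul_right (pow_dvd_pow _ (by omega)) _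
        rw [hhdef]
        exact dvd_sub ((hdg.mul_left X)) (((pow_dvd_pow _ (by omega : k ≤ k+1)).trans ⟨q, hq⟩).mul_left _)
      have hmuh : k ≤ h.rootMultiplicity 1 :=
        (le_rootMultiplicity_iff hne3).mpr hdvdh
      have hIH := IH (fun j : Fin k => a j.succ) hmono (fun j => hap j.succ)
        (fun j => lam j.succ * ((a j.succ : 𝔽) - (a 0 : 𝔽))) hne2
      rw [← hform2] at hIH
      omega

/-- Frenkel's lemma: in characteristic `p`, a nonzero polynomial
`g(x) = ∑_{i=1}^m λ_i x^{a_i}` supported on `m` distinct exponents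
`0 ≤ a_1 < … < a_m ≤ p-1` has `1` as a root of multiplicity at most `m-1`. -/
theorem frenkel_multiplicity_bound (p m : ℕ) (hp : p.Prime)
    (𝔽 : Type) [Field 𝔽] [CharP 𝔽 p]
    (a : Fin m → ℕ) (ha : StrictMono a) (hap : ∀ i, a i ≤ p - 1)
    (lam : Fin m → 𝔽)
    (g : 𝔽[X]) (hg : g = ∑ i : Fin m, Polynomial.C (lam i) * Polynomial.X ^ (a i))
    (hg0 : g ≠ 0) :
    g.rootMultiplicity 1 ≤ m - 1 := by
  subst hg
  exact frenkel_aux p hp 𝔽 m a ha hap lam hg0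
end

section
/- Let p be prime, 𝔽 a field of characteristic p, and A ⊆ ℤ/pℤ with |A| = m ≥ 1. Then the uncertainty number u_𝔽(A) = min{ rank T_f : f ∈ 𝔽[ℤ/pℤ], f ≠ 0, supp(f) ⊆ A } equals p - m + 1, where T_f : 𝔽[ℤ/pℤ] → 𝔽[ℤ/pℤ] is multiplication by f. -/
/-!
Put `t = x - 1`, where `x` is the generator of `ℤ/pℤ`. In characteristic `p`,
`t ^ p = x ^ p - 1 = 0`, so `1, t, …, t ^ (p - 1)` is a basis of `𝔽[ℤ/pℤ] ≅ 𝔽[t]/(t ^ p)`.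
A nonzero `f` is `t ^ v` times a unit, hence `T_f` has rank `p - v`. If `f` is supported on `A`,
its first `m` coordinates in this basis are `∑ a ∈ A, f a * choose a i` for `i < m`; the binomial
matrix `(choose a i)` is a Vandermonde matrix up to column scaling, so `v < m`. Conversely, `m`
unknowns subject to `m - 1` linear conditions give an `f` supported on `A` with `v = m - 1`.
-/

theorem one_add_pow_eq_sum_choose_smul {𝔽 R : Type*} [CommSemiring 𝔽] [CommSemiring R]
    [Algebra 𝔽 R] (t : R) {a n : ℕ} (ha : a < n) :
    (1 + t) ^ a = ∑ i : Fin n, (a.choose i : 𝔽) • t ^ (i : ℕ) := by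
  rw [Fin.sum_univ_eq_sum_range (fun i => (a.choose i : 𝔽) • t ^ i), add_comm, add_pow,
    ← Finset.sum_range_add_sum_Ico _ ha, Finset.sum_eq_zero (s := Finset.Ico _ _) fun i hi => by
      rw [Nat.choose_eq_zero_of_lt (Finset.mem_Ico.1 hi).1, Nat.cast_zero, zero_smul], add_zero]
  refine Finset.sum_congr rfl fun i _ => ?_
  rw [one_pow, mul_one, mul_comm, ← nsmul_eq_mul, ← Nat.cast_smul_eq_nsmul 𝔽]

theorem exists_pow_dvd_and_not_pow_succ_dvd {M : Type*} [CommMonoidWithZero M] {t f : M}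
    (ht : IsNilpotent t) (hf : f ≠ 0) : ∃ k, t ^ k ∣ f ∧ ¬ t ^ (k + 1) ∣ f := by
  classical
  obtain ⟨n, hn⟩ := ht
  have hex : ∃ k, ¬ t ^ (k + 1) ∣ f :=
    ⟨n, fun h => hf (zero_dvd_iff.1 (by rwa [pow_succ, hn, zero_mul] at h))⟩
  refine ⟨Nat.find hex, ?_, Nat.find_spec hex⟩
  cases h : Nat.find hex with
  | zero => exact pow_zero t ▸ one_dvd f
  | succ k => exact not_not.1 (Nat.find_min hex (h ▸ k.lt_succ_self))

theorem Matrix.det_choose_ne_zero {𝔽 : Type*} [Field 𝔽] {n : ℕ} (v : Fin n → ℕ)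
    (hv : Function.Injective fun i => (v i : 𝔽)) :
    (Matrix.of fun i j : Fin n => ((v i).choose j : 𝔽)).det ≠ 0 := by
  have hdesc : (Matrix.of fun i j : Fin n => (descPochhammer 𝔽 j).eval (v i : 𝔽)).det =
      (∏ j : Fin n, ((j : ℕ).factorial : 𝔽)) *
        (Matrix.of fun i j : Fin n => ((v i).choose j : 𝔽)).det := by
    rw [← det_mul_row]
    congr
    ext i j
    simp [descPochhammer_eval_eq_descFactorial, Nat.descFactorial_eq_factorial_mul_choose]
  have h := Matrix.det_vandermonde_ne_zero_iff.2 hv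
  rw [det_eval_matrixOfPolynomials_eq_det_vandermonde _ (fun j => descPochhammer 𝔽 j)
    (fun j => descPochhammer_natDegree 𝔽 j) (fun j => monic_descPochhammer 𝔽 j), hdesc] at h
  exact right_ne_zero_of_mul h

namespace PowerBasis

variable {𝔽 R : Type*} [Field 𝔽] [CommRing R] [Algebra 𝔽 R] (pb : PowerBasis 𝔽 R)

theorem range_mulLeft_gen_pow (hnil : pb.gen ^ pb.dim = 0) (k : ℕ) :
    LinearMap.range (LinearMap.mulLeft 𝔽 (pb.gen ^ k)) =
      Submodule.span 𝔽 (pb.basis '' {i | k ≤ (i : ℕ)}) := by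
  apply le_antisymm
  · rw [LinearMap.range_eq_map, ← pb.basis.span_eq, Submodule.map_span, Submodule.span_le]
    rintro _ ⟨_, ⟨j, rfl⟩, rfl⟩
    rw [LinearMap.mulLeft_apply, coe_basis, ← pow_add]
    by_cases h : k + j < pb.dim
    · exact Submodule.subset_span ⟨⟨k + j, h⟩, Nat.le_add_right k j, by simp⟩
    · rw [← Nat.add_sub_of_le (not_lt.1 h), pow_add, hnil, zero_mul]
      exact Submodule.zero_mem _
  · rw [Submodule.span_le]
    rintro _ ⟨i, hi, rfl⟩
    exact ⟨pb.gen ^ (i - k : ℕ), by simp [← pow_add, Nat.add_sub_of_le hi]⟩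

theorem gen_pow_dvd_iff (hnil : pb.gen ^ pb.dim = 0) {k : ℕ} {f : R} :
    pb.gen ^ k ∣ f ↔ ∀ i : Fin pb.dim, (i : ℕ) < k → pb.basis.repr f i = 0 := by
  have : pb.gen ^ k ∣ f ↔ f ∈ LinearMap.range (LinearMap.mulLeft 𝔽 (pb.gen ^ k)) := by
    simp [Dvd.dvd, eq_comm]
  rw [this, range_mulLeft_gen_pow pb hnil, Module.Basis.mem_span_image]
  simp only [Finsupp.support_subset_iff, Set.mem_ofPred_eq, not_le]

theorem finrank_range_mulLeft_gen_pow (hnil : pb.gen ^ pb.dim = 0) (k : ℕ) :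
    Module.finrank 𝔽 (LinearMap.range (LinearMap.mulLeft 𝔽 (pb.gen ^ k))) = pb.dim - k := by
  classical
  rw [range_mulLeft_gen_pow pb hnil, Set.image_eq_range,
    finrank_span_eq_card (b := fun i : ({i | k ≤ (i : ℕ)} : Set (Fin pb.dim)) => pb.basis i)
      (pb.basis.linearIndependent.comp _ Subtype.val_injective),
    Fintype.card_subtype]
  have := Finset.card_filter_add_card_filter_not (s := Finset.univ)
    (fun i : Fin pb.dim => (i : ℕ) < k)
  simp only [not_lt, Finset.card_univ, Fintype.card_fin, Fin.card_filter_val_lt] at this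
  simp only [Set.mem_ofPred_eq]
  omega

theorem isUnit_of_not_gen_dvd (hnil : pb.gen ^ pb.dim = 0) {g : R} (hg : ¬ pb.gen ∣ g) :
    IsUnit g := by
  obtain ⟨i, hi, hgi⟩ : ∃ i : Fin pb.dim, (i : ℕ) < 1 ∧ pb.basis.repr g i ≠ 0 := by
    rw [← pow_one pb.gen, gen_pow_dvd_iff pb hnil] at hg
    push Not at hg
    exact hg
  have h1 : pb.basis i = 1 := by rw [basis_eq_pow, Nat.lt_one_iff.1 hi, pow_zero]
  have hdvd : pb.gen ∣ g - algebraMap 𝔽 R (pb.basis.repr g i) := by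
    rw [← pow_one pb.gen, gen_pow_dvd_iff pb hnil]
    intro j hj
    have hji : j = i := Fin.ext (by omega)
    subst hji
    rw [Algebra.algebraMap_eq_smul_one, ← h1, map_sub, map_smul, Module.Basis.repr_self]
    simp
  have hnilp : IsNilpotent (g - algebraMap 𝔽 R (pb.basis.repr g i)) := by
    obtain ⟨h, hh⟩ := hdvd
    exact hh ▸ (Commute.all _ _).isNilpotent_mul_right ⟨pb.dim, hnil⟩
  simpa using hnilp.isUnit_add_left_of_commute
    ((isUnit_iff_ne_zero.2 hgi).map (algebraMap 𝔽 R)) (Commute.all _ _)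

theorem finrank_range_mulLeft_of_gen_pow_dvd (hnil : pb.gen ^ pb.dim = 0) {k : ℕ} {f : R}
    (hk : pb.gen ^ k ∣ f) (hk' : ¬ pb.gen ^ (k + 1) ∣ f) :
    Module.finrank 𝔽 (LinearMap.range (LinearMap.mulLeft 𝔽 f)) = pb.dim - k := by
  obtain ⟨g, rfl⟩ := hk
  have hg : IsUnit g := isUnit_of_not_gen_dvd pb hnil fun ⟨h, hh⟩ =>
    hk' ⟨h, by rw [hh, pow_succ, mul_assoc]⟩
  have hsurj : LinearMap.range (LinearMap.mulLeft 𝔽 g) = ⊤ :=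
    LinearMap.range_eq_top.2 fun y => ⟨hg.unit⁻¹ * y, by simp [← mul_assoc]⟩
  rw [LinearMap.mulLeft_mul, LinearMap.range_comp_of_range_eq_top _ hsurj,
    finrank_range_mulLeft_gen_pow pb hnil]

theorem basis_repr_one_add_gen_pow {a : ℕ} (ha : a < pb.dim) (i : Fin pb.dim) :
    pb.basis.repr ((1 + pb.gen) ^ a) i = a.choose i := by
  simp_rw [one_add_pow_eq_sum_choose_smul (𝔽 := 𝔽) pb.gen ha, ← basis_eq_pow,
    Module.Basis.repr_sum_self]

theorem not_gen_pow_card_dvd_of_mem_span (hnil : pb.gen ^ pb.dim = 0) {ι : Type*} [Fintype ι]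
    (a : ι → ℕ) (ha : ∀ j, a j < pb.dim) (hinj : Function.Injective fun j => (a j : 𝔽)) {f : R}
    (hf : f ∈ Submodule.span 𝔽 (Set.range fun j => (1 + pb.gen) ^ a j)) (hf0 : f ≠ 0) :
    ¬ pb.gen ^ Fintype.card ι ∣ f := by
  obtain ⟨c, rfl⟩ := Submodule.mem_span_range_iff_exists_fun 𝔽 |>.1 hf
  rw [gen_pow_dvd_iff pb hnil]
  intro hdvd
  have hm : Fintype.card ι ≤ pb.dim := by
    simpa using Fintype.card_le_of_injective (fun j => (⟨a j, ha j⟩ : Fin pb.dim))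
      fun j k h => hinj (by simp_all)
  set e := Fintype.equivFin ι
  have hc : c ∘ e.symm = 0 := by
    refine Matrix.eq_zero_of_vecMul_eq_zero
      (Matrix.det_choose_ne_zero (a ∘ e.symm) (hinj.comp e.symm.injective)) (funext fun i => ?_)
    have := hdvd ⟨i, i.2.trans_le hm⟩ i.2
    simp only [map_sum, map_smul, Finsupp.coe_finsetSum, Finset.sum_apply, Finsupp.smul_apply,
      basis_repr_one_add_gen_pow pb (ha _), smul_eq_mul] at this
    simpa [Matrix.vecMul, dotProduct, e.symm.sum_comp (fun j => c j * ((a j).choose i : 𝔽))]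
      using this
  apply hf0
  have : c = 0 := funext fun j => by simpa using congr_fun hc (e j)
  simp [this]

theorem exists_ne_zero_gen_pow_dvd_of_lt_finrank (hnil : pb.gen ^ pb.dim = 0)
    (W : Submodule 𝔽 R) {k : ℕ} (hk : k < Module.finrank 𝔽 W) :
    ∃ f ∈ W, f ≠ 0 ∧ pb.gen ^ k ∣ f := by
  have : Module.Finite 𝔽 R := pb.finite
  set I := LinearMap.range (LinearMap.mulLeft 𝔽 (pb.gen ^ k))
  have hquot : Module.finrank 𝔽 (R ⧸ I) < Module.finrank 𝔽 W := by
    have := Submodule.finrank_quotient_add_finrank I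
    rw [finrank_range_mulLeft_gen_pow pb hnil, pb.finrank] at this
    omega
  obtain ⟨f, hf, hf0⟩ := Submodule.exists_mem_ne_zero_of_ne_bot
    (LinearMap.ker_ne_bot_of_finrank_lt (f := I.mkQ ∘ₗ W.subtype) hquot)
  refine ⟨f, f.2, by simpa using hf0, ?_⟩
  obtain ⟨g, hg⟩ := (Submodule.Quotient.mk_eq_zero I).1 hf
  exact ⟨g, hg.symm⟩

end PowerBasis

open MonoidAlgebra

theorem MonoidAlgebra.mem_span_single_ofAdd_iff {k G : Type*} [Semiring k] (A : Finset G)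
    (f : MonoidAlgebra k (Multiplicative G)) :
    f ∈ Submodule.span k (Set.range fun x : A => single (Multiplicative.ofAdd (x : G)) (1 : k)) ↔
      ∀ x, f.coeff (Multiplicative.ofAdd x) ≠ 0 → x ∈ A := by
  have hb : (fun x : A => single (Multiplicative.ofAdd (x : G)) (1 : k)) =
      MonoidAlgebra.basis (Multiplicative G) k ∘ fun x : A => Multiplicative.ofAdd (x : G) :=
    funext fun x => (basis_apply k _).symm
  rw [hb, Set.range_comp, Module.Basis.mem_span_image]
  refine ⟨fun h x hx => ?_, fun h m hm => ⟨⟨m.toAdd, h _ (Finsupp.mem_support_iff.1 hm)⟩, rfl⟩⟩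
  obtain ⟨y, hy⟩ := h (Finsupp.mem_support_iff.2 hx)
  exact Multiplicative.ofAdd.injective hy ▸ y.2

section GroupAlgebra

variable (p : ℕ) [NeZero p] (𝔽 : Type*) [Field 𝔽]

theorem of_ofAdd_one_pow_val (a : ZMod p) :
    of 𝔽 (Multiplicative (ZMod p)) (.ofAdd 1) ^ a.val = single (.ofAdd a) 1 := by
  rw [← map_pow, ← ofAdd_nsmul, nsmul_one, ZMod.natCast_zmod_val, of_apply]

theorem top_le_span_range_of_ofAdd_one_sub_one_pow :
    ⊤ ≤ Submodule.span 𝔽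
      (Set.range fun i : Fin p => (of 𝔽 (Multiplicative (ZMod p)) (.ofAdd 1) - 1) ^ (i : ℕ)) := by
  rw [← (MonoidAlgebra.basis (Multiplicative (ZMod p)) 𝔽).span_eq, Submodule.span_le]
  set t := of 𝔽 (Multiplicative (ZMod p)) (.ofAdd 1) - 1
  rintro _ ⟨g, rfl⟩
  rw [basis_apply, ← ofAdd_toAdd g, ← of_ofAdd_one_pow_val, ← add_sub_cancel 1 (of _ _ _),
    one_add_pow_eq_sum_choose_smul (𝔽 := 𝔽) t (ZMod.val_lt _)]
  exact Submodule.sum_mem _ fun i _ => Submodule.smul_mem _ _ (Submodule.subset_span ⟨i, rfl⟩)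

noncomputable def groupAlgebraPowerBasis :
    PowerBasis 𝔽 (MonoidAlgebra 𝔽 (Multiplicative (ZMod p))) where
  gen := of 𝔽 (Multiplicative (ZMod p)) (.ofAdd 1) - 1
  dim := p
  basis := basisOfTopLeSpanOfCardEqFinrank _ (top_le_span_range_of_ofAdd_one_sub_one_pow p 𝔽) <| by
    rw [Module.finrank_eq_card_basis (MonoidAlgebra.basis _ 𝔽), Fintype.card_fin,
      Fintype.card_multiplicative, ZMod.card]
  basis_eq_pow i := by rw [coe_basisOfTopLeSpanOfCardEqFinrank]

theorem groupAlgebraPowerBasis_gen_pow_dim [CharP 𝔽 p] (hp : p.Prime) :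
    (groupAlgebraPowerBasis p 𝔽).gen ^ (groupAlgebraPowerBasis p 𝔽).dim = 0 := by
  have : Fact p.Prime := ⟨hp⟩
  have : CharP (MonoidAlgebra 𝔽 (Multiplicative (ZMod p))) p :=
    charP_of_injective_algebraMap (algebraMap 𝔽 _).injective p
  rw [groupAlgebraPowerBasis, sub_pow_char, one_pow, ← map_pow, ← ofAdd_nsmul, nsmul_one,
    ZMod.natCast_self, ofAdd_zero, map_one, sub_self]

theorem one_add_groupAlgebraPowerBasis_gen_pow_val (a : ZMod p) :
    (1 + (groupAlgebraPowerBasis p 𝔽).gen) ^ a.val = single (.ofAdd a) 1 := by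
  rw [groupAlgebraPowerBasis, add_sub_cancel, of_ofAdd_one_pow_val]

variable [CharP 𝔽 p]

theorem not_groupAlgebraPowerBasis_gen_pow_card_dvd (hp : p.Prime) {A : Finset (ZMod p)}
    {f : MonoidAlgebra 𝔽 (Multiplicative (ZMod p))}
    (hfA : ∀ x, f.coeff (.ofAdd x) ≠ 0 → x ∈ A) (hf0 : f ≠ 0) :
    ¬ (groupAlgebraPowerBasis p 𝔽).gen ^ A.card ∣ f := by
  have hf := (mem_span_single_ofAdd_iff A f).2 hfA
  simp_rw [← one_add_groupAlgebraPowerBasis_gen_pow_val] at hf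
  rw [← Fintype.card_coe A]
  refine (groupAlgebraPowerBasis p 𝔽).not_gen_pow_card_dvd_of_mem_span
    (groupAlgebraPowerBasis_gen_pow_dim p 𝔽 hp) (fun x : A => (x : ZMod p).val)
    (fun x => (x : ZMod p).val_lt) ?_ hf hf0
  intro x y h
  exact Subtype.val_injective (ZMod.castHom_injective 𝔽 (by simpa [ZMod.natCast_val] using h))

theorem exists_ne_zero_groupAlgebraPowerBasis_gen_pow_dvd (hp : p.Prime) {A : Finset (ZMod p)}
    (hA : A.Nonempty) :
    ∃ f : MonoidAlgebra 𝔽 (Multiplicative (ZMod p)), f ≠ 0 ∧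
      (∀ x, f.coeff (.ofAdd x) ≠ 0 → x ∈ A) ∧
        (groupAlgebraPowerBasis p 𝔽).gen ^ (A.card - 1) ∣ f := by
  have hW : Module.finrank 𝔽 (Submodule.span 𝔽
      (Set.range fun x : A => single (Multiplicative.ofAdd (x : ZMod p)) (1 : 𝔽))) = A.card := by
    rw [finrank_span_eq_card (b := fun x : A => single (Multiplicative.ofAdd (x : ZMod p)) (1 : 𝔽))
      ((MonoidAlgebra.basis _ 𝔽).linearIndependent.comp _
      (Multiplicative.ofAdd.injective.comp Subtype.val_injective)), Fintype.card_coe]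
  obtain ⟨f, hfW, hf0, hdvd⟩ :=
    (groupAlgebraPowerBasis p 𝔽).exists_ne_zero_gen_pow_dvd_of_lt_finrank
      (groupAlgebraPowerBasis_gen_pow_dim p 𝔽 hp) _ (k := A.card - 1)
    (by rw [hW]; exact Nat.sub_lt hA.card_pos one_pos)
  exact ⟨f, hf0, (mem_span_single_ofAdd_iff A f).1 hfW, hdvd⟩

end GroupAlgebra

/-- If `𝔽` has characteristic `p` and `A ⊆ ℤ/pℤ` has `m ≥ 1` elements, then the
uncertainty number `u_𝔽(A) = min{rank T_f : 0 ≠ f ∈ 𝔽[ℤ/pℤ], supp(f) ⊆ A}`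
equals `p - m + 1`, where `T_f` is multiplication by `f` on the group algebra. -/
theorem uncertainty_number_char_p (p m : ℕ) (hp : p.Prime) [NeZero p]
    (𝔽 : Type) [Field 𝔽] [CharP 𝔽 p]
    (A : Finset (ZMod p)) (hA : A.card = m) (hm : 1 ≤ m) :
    sInf {r : ℕ | ∃ f : MonoidAlgebra 𝔽 (Multiplicative (ZMod p)), f ≠ 0 ∧
        (∀ x : ZMod p, f.coeff (Multiplicative.ofAdd x) ≠ 0 → x ∈ A) ∧
        r = Module.finrank 𝔽 (LinearMap.range (LinearMap.mulLeft 𝔽 f))} =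
      p - m + 1 := by
  subst hA
  set pb := groupAlgebraPowerBasis p 𝔽
  have hnil : pb.gen ^ pb.dim = 0 := groupAlgebraPowerBasis_gen_pow_dim p 𝔽 hp
  have hdim : pb.dim = p := rfl
  have hmp : A.card ≤ p := A.card_le_univ.trans_eq (ZMod.card p)
  refine IsLeast.csInf_eq ⟨?_, ?_⟩
  · obtain ⟨f, hf0, hfA, hdvd⟩ :=
      exists_ne_zero_groupAlgebraPowerBasis_gen_pow_dvd p 𝔽 hp (Finset.card_pos.1 hm)
    have hndvd := not_groupAlgebraPowerBasis_gen_pow_card_dvd p 𝔽 hp hfA hf0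
    rw [← Nat.sub_add_cancel hm] at hndvd
    refine ⟨f, hf0, hfA, ?_⟩
    rw [pb.finrank_range_mulLeft_of_gen_pow_dvd hnil hdvd hndvd]
    omega
  · rintro _ ⟨f, hf0, hfA, rfl⟩
    obtain ⟨k, hk, hk'⟩ := exists_pow_dvd_and_not_pow_succ_dvd ⟨pb.dim, hnil⟩ hf0
    have hkm : k < A.card := by
      by_contra! h
      exact not_groupAlgebraPowerBasis_gen_pow_card_dvd p 𝔽 hp hfA hf0
        ((pow_dvd_pow _ h).trans hk)
    rw [pb.finrank_range_mulLeft_of_gen_pow_dvd hnil hk hk']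
    omega
end
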